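/- If One has a winning strategy in the point-open game on a topological space X, then the Gδ-modification X_δ is Lindelöf. -/

import Mathlib

/-!
Fix a winning strategy `σ` of One and a cover `𝒰` of `X` by Gδ sets. At every position `p`
choose `U p ∈ 𝒰` containing `σ p` and write `U p = ⋂ k, V p k` with `V p k` open: these are
Two's candidate answers at `p`. The positions reached by such answers are indexed by finite
sequences of naturals, so only countably many sets `U p` occur. A point outside all of them
would let Two answer every move with a `V p k` missing it, beating `σ`. Since the Gδ sets form
a basis of `X_δ`, this is the Lindelöf property of `X_δ`.
-/

open Set TopologicalSpace

universe u

def IsOpenCover {X : Type u} [TopologicalSpace X] (𝒰 : Set (Set X)) : Prop :=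
  (∀ U ∈ 𝒰, IsOpen U) ∧ ⋃₀ 𝒰 = univ

def IsAlsterCover {X : Type u} [TopologicalSpace X] (𝒰 : Set (Set X)) : Prop :=
  (∀ U ∈ 𝒰, IsGδ U) ∧ ⋃₀ 𝒰 = univ ∧ ∀ K : Set X, IsCompact K → ∃ U ∈ 𝒰, K ⊆ U

def AlsterSpace (X : Type u) [TopologicalSpace X] : Prop :=
  ∀ 𝒰 : Set (Set X), IsAlsterCover 𝒰 → ∃ 𝒱 ⊆ 𝒰, 𝒱.Countable ∧ ⋃₀ 𝒱 = univ

def IsKCover {X : Type u} [TopologicalSpace X] (𝒰 : Set (Set X)) : Prop :=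
  (∀ U ∈ 𝒰, IsOpen U) ∧ ⋃₀ 𝒰 = univ ∧ ∀ K : Set X, IsCompact K → ∃ U ∈ 𝒰, K ⊆ U

def RothbergerSpace (X : Type u) [TopologicalSpace X] : Prop :=
  ∀ 𝒰 : ℕ → Set (Set X), (∀ n, IsOpenCover (𝒰 n)) →
    ∃ f : ℕ → Set X, (∀ n, f n ∈ 𝒰 n) ∧ ⋃ n, f n = univ

/-- The list of the first `n + 1` values of `f` (the history of moves up to inning `n`). -/
def hist {α : Type u} (f : ℕ → α) (n : ℕ) : List α := (List.range (n + 1)).map f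

/-- Two has a winning strategy in the Menger game on `X`. -/
def MengerTwoWin (X : Type u) [TopologicalSpace X] : Prop :=
  ∃ σ : List (Set (Set X)) → Set (Set X),
    ∀ 𝒰 : ℕ → Set (Set X), (∀ n, IsOpenCover (𝒰 n)) →
      (∀ n, (σ (hist 𝒰 n)).Finite ∧ σ (hist 𝒰 n) ⊆ 𝒰 n) ∧
      (⋃ n, ⋃₀ σ (hist 𝒰 n)) = univ

/-- Two has a winning strategy in the Rothberger game on `X`. -/
def RothTwoWin (X : Type u) [TopologicalSpace X] : Prop :=
  ∃ σ : List (Set (Set X)) → Set X,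
    ∀ 𝒰 : ℕ → Set (Set X), (∀ n, IsOpenCover (𝒰 n)) →
      (∀ n, σ (hist 𝒰 n) ∈ 𝒰 n) ∧ (⋃ n, σ (hist 𝒰 n)) = univ

/-- One has a winning strategy in the Rothberger game on `X`. -/
def RothOneWin (X : Type u) [TopologicalSpace X] : Prop :=
  ∃ σ : List (Set X) → Set (Set X), (∀ l, IsOpenCover (σ l)) ∧
    ∀ g : ℕ → Set X, (∀ n, g n ∈ σ ((List.range n).map g)) → (⋃ n, g n) ≠ univ

/-- One has a winning strategy in the point-open game on `X`. -/
def POOneWin (X : Type u) [TopologicalSpace X] : Prop :=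
  ∃ σ : List (Set X) → X,
    ∀ g : ℕ → Set X, (∀ n, IsOpen (g n) ∧ σ ((List.range n).map g) ∈ g n) →
      (⋃ n, g n) = univ

/-- Two has a winning strategy in the point-open game on `X`. -/
def POTwoWin (X : Type u) [TopologicalSpace X] : Prop :=
  ∃ σ : List X → Set X,
    ∀ x : ℕ → X, (∀ n, IsOpen (σ (hist x n)) ∧ x n ∈ σ (hist x n)) ∧
      (⋃ n, σ (hist x n)) ≠ univ

/-- The Gδ-modification of the topology of `X`. -/
def gdeltaTop (X : Type u) [TopologicalSpace X] : TopologicalSpace X :=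
  generateFrom {s : Set X | IsGδ s}

def Scattered (X : Type u) [TopologicalSpace X] : Prop :=
  ∀ S : Set X, S.Nonempty → ∃ x ∈ S, ∃ U : Set X, IsOpen U ∧ U ∩ S = {x}

namespace POOneWin

variable {X : Type u} [TopologicalSpace X]

/-- Two answers at position `p` with the `k`-th candidate `V p k`; the list of choices `k` is
stored latest first. -/
def position (V : List (Set X) → ℕ → Set X) : List ℕ → List (Set X)
  | [] => []
  | k :: s => position V s ++ [V (position V s) k]

theorem iUnion_iInter_position_eq_univ {σ : List (Set X) → X}
    (hσ : ∀ g : ℕ → Set X, (∀ n, IsOpen (g n) ∧ σ ((List.range n).map g) ∈ g n) →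
      (⋃ n, g n) = univ)
    {V : List (Set X) → ℕ → Set X} (hVo : ∀ p k, IsOpen (V p k)) (hσV : ∀ p k, σ p ∈ V p k) :
    ⋃ s, ⋂ k, V (position V s) k = univ := by
  refine eq_univ_of_forall fun x => ?_
  by_contra hx
  simp only [mem_iUnion, mem_iInter, not_exists, not_forall] at hx
  choose k hk using hx
  let choices : ℕ → List ℕ := fun n => n.rec [] fun _ s => k s :: s
  let g : ℕ → Set X := fun n => V (position V (choices n)) (k (choices n))
  have hplay : ∀ n, (List.range n).map g = position V (choices n) := by
    intro n
    induction n with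
    | zero => rfl
    | succ n ih => rw [List.range_succ, List.map_append, ih]; rfl
  obtain ⟨_, ⟨n, rfl⟩, hxn⟩ :=
    (hσ g fun n => ⟨hVo _ _, hplay n ▸ hσV _ _⟩).symm ▸ mem_univ x
  exact hk _ hxn

theorem exists_countable_subcover_of_isGδ (h : POOneWin X) {𝒰 : Set (Set X)}
    (hGδ : ∀ U ∈ 𝒰, IsGδ U) (hcov : ⋃₀ 𝒰 = univ) :
    ∃ 𝒱 ⊆ 𝒰, 𝒱.Countable ∧ ⋃₀ 𝒱 = univ := by
  obtain ⟨σ, hσ⟩ := h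
  have hchoice : ∀ p : List (Set X), ∃ U ∈ 𝒰, σ p ∈ U ∧
      ∃ V : ℕ → Set X, (∀ k, IsOpen (V k)) ∧ U = ⋂ k, V k := by
    intro p
    obtain ⟨U, hU, hσU⟩ := mem_sUnion.mp (hcov ▸ mem_univ (σ p))
    exact ⟨U, hU, hσU, isGδ_iff_eq_iInter_nat.mp (hGδ U hU)⟩
  choose U hU hσU V hVo hUV using hchoice
  refine ⟨range fun s => U (position V s), range_subset_iff.mpr fun s => hU _,
    countable_range _, ?_⟩
  simp only [sUnion_range, hUV]
  exact iUnion_iInter_position_eq_univ hσ hVo fun p => mem_iInter.mp (hUV p ▸ hσU p)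

end POOneWin

theorem TopologicalSpace.IsTopologicalBasis.lindelofSpace_of_countable_subcover
    {X : Type u} [TopologicalSpace X] {B : Set (Set X)} (hB : IsTopologicalBasis B)
    (h : ∀ 𝒰 ⊆ B, ⋃₀ 𝒰 = univ → ∃ 𝒱 ⊆ 𝒰, 𝒱.Countable ∧ ⋃₀ 𝒱 = univ) : LindelofSpace X := by
  refine ⟨isLindelof_of_countable_subcover fun U hUo hcov => ?_⟩
  obtain ⟨𝒱, h𝒱, h𝒱c, h𝒱cov⟩ := h {b ∈ B | ∃ i, b ⊆ U i} (fun b hb => hb.1) <|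
    eq_univ_of_forall fun x => by
      obtain ⟨i, hi⟩ := mem_iUnion.mp (hcov (mem_univ x))
      obtain ⟨b, hb, hxb, hbU⟩ := hB.exists_subset_of_mem_open hi (hUo i)
      exact ⟨b, ⟨hb, i, hbU⟩, hxb⟩
  choose i hi using fun V : 𝒱 => (h𝒱 V.2).2
  have := h𝒱c.to_subtype
  refine ⟨range i, countable_range i, fun x _ => ?_⟩
  obtain ⟨V, hV, hxV⟩ := mem_sUnion.mp (h𝒱cov ▸ mem_univ x)
  exact mem_biUnion (mem_range_self ⟨V, hV⟩) (hi ⟨V, hV⟩ hxV)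

theorem isTopologicalBasis_gdeltaTop (X : Type u) [TopologicalSpace X] :
    @IsTopologicalBasis X (gdeltaTop X) {s | IsGδ s} := by
  have := @isTopologicalBasis_of_subbasis_of_inter X (gdeltaTop X) {s | IsGδ s} rfl
    fun _ hs _ ht => hs.inter ht
  rwa [insert_eq_of_mem (s := {s : Set X | IsGδ s}) IsGδ.univ] at this

/-- One winning the point-open game implies the Gδ-modification is Lindelöf. -/
theorem poOneWin_gdelta_lindelof (X : Type u) [TopologicalSpace X] (h : POOneWin X) :
    @LindelofSpace X (gdeltaTop X) :=
  @IsTopologicalBasis.lindelofSpace_of_countable_subcover X (gdeltaTop X) _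
    (isTopologicalBasis_gdeltaTop X) fun _ h𝒰 hcov =>
      h.exists_countable_subcover_of_isGδ h𝒰 hcov
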